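/- arXiv:cs/0405100 — 2 statements merged into one kernel-verified Lean document; each statement's English description precedes it below -/
import Mathlib

section
/- For all types τ and σ and any parameter α, Max(τ[σ/α]) = Max(τ)[Max(σ)/α], i.e., the maximum-supertype operation commutes with substitution of a single parameter. -/
structure Sig (K : Type) where
  ar : K → ℕ
  le : K → K → Prop
  le_refl : ∀ k, le k k
  le_trans : ∀ {a b c}, le a b → le b c → le a c
  le_antisymm : ∀ {a b}, le a b → le b a → a = b
  ar_anti : ∀ {a b}, le a b → ar b ≤ ar a
  iota : K → K → ℕ → ℕ
  iota_lt : ∀ {a b}, le a b → ∀ {i}, i < ar b → iota a b i < ar a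
  iota_inj : ∀ {a b}, le a b → ∀ {i j}, i < ar b → j < ar b → iota a b i = iota a b j → i = j
  iota_id : ∀ k i, iota k k i = i
  iota_comp : ∀ {a b c}, le a b → le b c → ∀ {i}, i < ar c → iota a c i = iota a b (iota b c i)

/-- Types: first-order terms over constructors `K` and parameters (type variables) `ℕ`. -/
inductive Ty (K : Type) : Type
  | param : ℕ → Ty K
  | con : K → List (Ty K) → Ty K

/-- The structural covariant subtyping order. -/
inductive SubTy {K : Type} (S : Sig K) : Ty K → Ty K → Prop
  | param (n : ℕ) : SubTy S (.param n) (.param n)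
  | con {k k' : K} {as as' : List (Ty K)} :
      S.le k k' → as.length = S.ar k → as'.length = S.ar k' →
      (∀ i, i < S.ar k' → SubTy S (as.getD (S.iota k k' i) (.param 0)) (as'.getD i (.param 0))) →
      SubTy S (.con k as) (.con k' as')

/-- Application of a type substitution. -/
def Ty.subst {K : Type} (θ : ℕ → Ty K) : Ty K → Ty K
  | .param n => θ n
  | .con k as => .con k (as.attach.map (fun a => a.1.subst θ))
decreasing_by simp_wf; have := List.sizeOf_lt_of_mem a.2; omega

/-- Number of occurrences of constructors and parameters. -/
def Ty.size {K : Type} : Ty K → ℕ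
  | .param _ => 1
  | .con _ as => 1 + (as.attach.map (fun a => a.1.size)).sum
decreasing_by simp_wf; have := List.sizeOf_lt_of_mem a.2; omega

/-- The parameter α occurs in a type. -/
inductive Occurs {K : Type} (α : ℕ) : Ty K → Prop
  | param : Occurs α (.param α)
  | con {k : K} {as : List (Ty K)} {t : Ty K} : t ∈ as → Occurs α t → Occurs α (.con k as)

/-- `m` is the maximum of the set of supertypes of `t`. -/
def IsMaxTy {K : Type} (S : Sig K) (t m : Ty K) : Prop :=
  SubTy S t m ∧ ∀ s, SubTy S t s → SubTy S s m

/-- Substitution of a single parameter: `t[σ/α]`. -/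
def Ty.subst1 {K : Type} (α : ℕ) (σ : Ty K) (t : Ty K) : Ty K :=
  t.subst (fun n => if n = α then σ else .param n)

/-!
A maximal supertype of `K(τ₁, …, τₙ)` is exactly `Kᵗᵒᵖ(M₁, …, Mₘ)`, where `Kᵗᵒᵖ` is the greatest
constructor above `K` and `Mᵢ` is a maximal supertype of the argument `τ_{ι(i)}`; a parameter is its
own maximal supertype. So maxima are computed structurally, and by induction on `τ` they commute
with every substitution `θ` once each `θ n` is replaced by its maximum.
-/

section

variable {K : Type} {S : Sig K}

theorem List.getD_map_of_lt {α β : Type*} (f : α → β) {l : List α} {i : ℕ} (hi : i < l.length)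
    (d : α) (d' : β) : (l.map f).getD i d' = f (l.getD i d) := by
  grind

theorem Ty.subst_con (θ : ℕ → Ty K) (k : K) (as : List (Ty K)) :
    (Ty.con k as).subst θ = .con k (as.map (Ty.subst θ)) := by
  rw [Ty.subst, List.attach_map_val (f := Ty.subst θ)]

theorem SubTy.eq_of_param {n : ℕ} {s : Ty K} (h : SubTy S (.param n) s) : s = .param n := by
  cases h; rfl

theorem SubTy.exists_con_of_con {k : K} {as : List (Ty K)} {s : Ty K}
    (h : SubTy S (.con k as) s) : ∃ k' as', s = .con k' as' := by
  cases h; exact ⟨_, _, rfl⟩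

theorem SubTy.con_inv {k k' : K} {as as' : List (Ty K)} (h : SubTy S (.con k as) (.con k' as')) :
    S.le k k' ∧ as.length = S.ar k ∧ as'.length = S.ar k' ∧
      ∀ i, i < S.ar k' → SubTy S (as.getD (S.iota k k' i) (.param 0)) (as'.getD i (.param 0)) := by
  cases h with | con hk hlen hlen' hargs => exact ⟨hk, hlen, hlen', hargs⟩

theorem SubTy.getD_iota_of_con {k k₁ k₂ : K} {as as₁ : List (Ty K)}
    (h : SubTy S (.con k as) (.con k₁ as₁)) (h₂ : S.le k₁ k₂) {i : ℕ} (hi : i < S.ar k₂) :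
    SubTy S (as.getD (S.iota k k₂ i) (.param 0)) (as₁.getD (S.iota k₁ k₂ i) (.param 0)) := by
  obtain ⟨hk, -, -, hargs⟩ := h.con_inv
  rw [S.iota_comp hk h₂ hi]
  exact hargs _ (S.iota_lt h₂ hi)

theorem SubTy.con_widen {k k₁ k₂ : K} {as as₁ : List (Ty K)}
    (h : SubTy S (.con k as) (.con k₁ as₁)) (h₂ : S.le k₁ k₂) :
    SubTy S (.con k as)
      (.con k₂ (List.ofFn fun i : Fin (S.ar k₂) => as₁.getD (S.iota k₁ k₂ i) (.param 0))) := by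
  obtain ⟨hk, hlen, -, -⟩ := h.con_inv
  refine .con (S.le_trans hk h₂) hlen (by simp) fun i hi => ?_
  rw [show (List.ofFn _).getD i (.param 0) = as₁.getD (S.iota k₁ k₂ i) (.param 0) by grind]
  exact h.getD_iota_of_con h₂ hi

theorem SubTy.con_set {k k' : K} {as as' : List (Ty K)} (h : SubTy S (.con k as) (.con k' as'))
    {i : ℕ} {s : Ty K} (hs : SubTy S (as.getD (S.iota k k' i) (.param 0)) s) :
    SubTy S (.con k as) (.con k' (as'.set i s)) := by
  obtain ⟨hk, hlen, hlen', hargs⟩ := h.con_inv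
  refine .con hk hlen (by simpa using hlen') fun j hj => ?_
  rw [show (as'.set i s).getD j (.param 0) = if i = j then s else as'.getD j (.param 0) by grind]
  split_ifs with hij
  · exact hij ▸ hs
  · exact hargs j hj

theorem IsMaxTy.param (n : ℕ) : IsMaxTy S (.param n) (.param n) :=
  ⟨.param n, fun _ hs => by rw [hs.eq_of_param]; exact .param n⟩

theorem IsMaxTy.con {k ktop : K} {as ms : List (Ty K)}
    (hk : S.le k ktop) (hktop : ∀ k', S.le k k' → S.le k' ktop)
    (hlen : as.length = S.ar k) (hmlen : ms.length = S.ar ktop)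
    (hargs : ∀ i, i < S.ar ktop →
      IsMaxTy S (as.getD (S.iota k ktop i) (.param 0)) (ms.getD i (.param 0))) :
    IsMaxTy S (.con k as) (.con ktop ms) := by
  refine ⟨.con hk hlen hmlen fun i hi => (hargs i hi).1, fun s hs => ?_⟩
  obtain ⟨k₁, as₁, rfl⟩ := hs.exists_con_of_con
  obtain ⟨hk₁, -, hlen₁, -⟩ := hs.con_inv
  exact .con (hktop _ hk₁) hlen₁ hmlen fun i hi =>
    (hargs i hi).2 _ (hs.getD_iota_of_con (hktop _ hk₁) hi)

theorem IsMaxTy.exists_eq_con {k ktop : K} {as : List (Ty K)} {m : Ty K}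
    (hk : S.le k ktop) (hktop : ∀ k', S.le k k' → S.le k' ktop) (h : IsMaxTy S (.con k as) m) :
    ∃ ms : List (Ty K), m = .con ktop ms ∧ as.length = S.ar k ∧ ms.length = S.ar ktop ∧
      ∀ i, i < S.ar ktop →
        IsMaxTy S (as.getD (S.iota k ktop i) (.param 0)) (ms.getD i (.param 0)) := by
  obtain ⟨hsub, hmax⟩ := h
  obtain ⟨k₁, ms, rfl⟩ := hsub.exists_con_of_con
  obtain ⟨hk₁, hlen, hmlen, hargs⟩ := hsub.con_inv
  -- Widening the head to `ktop`, or enlarging one argument, gives another supertype below `m`.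
  obtain rfl : k₁ = ktop :=
    S.le_antisymm (hktop _ hk₁) (hmax _ (hsub.con_widen (hktop _ hk₁))).con_inv.1
  refine ⟨ms, rfl, hlen, hmlen, fun i hi => ⟨hargs i hi, fun s hs => ?_⟩⟩
  have := (hmax _ (hsub.con_set hs)).con_inv.2.2.2 i hi
  rwa [S.iota_id, show (ms.set i s).getD i (.param 0) = s by grind] at this

theorem IsMaxTy.subst (htop : ∀ k : K, ∃ k', S.le k k' ∧ ∀ k'', S.le k k'' → S.le k'' k')
    {θ θ' : ℕ → Ty K} (hθ : ∀ n, IsMaxTy S (θ n) (θ' n)) :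
    ∀ τ m : Ty K, IsMaxTy S τ m → IsMaxTy S (τ.subst θ) (m.subst θ')
  | .param n, m, h => by
    rw [h.1.eq_of_param, Ty.subst, Ty.subst]
    exact hθ n
  | .con k as, m, h => by
    obtain ⟨ktop, hk, hktop⟩ := htop k
    obtain ⟨ms, rfl, hlen, hmlen, hargs⟩ := h.exists_eq_con hk hktop
    rw [Ty.subst_con, Ty.subst_con]
    refine .con hk hktop (by simpa using hlen) (by simpa using hmlen) fun i hi => ?_
    have hj : S.iota k ktop i < as.length := hlen ▸ S.iota_lt hk hi
    rw [List.getD_map_of_lt _ hj (.param 0), List.getD_map_of_lt _ (hmlen ▸ hi) (.param 0)]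
    exact IsMaxTy.subst htop hθ _ _ (hargs i hi)
  termination_by τ => sizeOf τ
  decreasing_by
    have := List.sizeOf_lt_of_mem (List.getD_eq_getElem _ (Ty.param 0) hj ▸ List.getElem_mem hj)
    simp only [Ty.con.sizeOf_spec]
    omega

end

/-- Max(τ[σ/α]) = Max(τ)[Max(σ)/α]. -/
theorem max_subst1 {K : Type} (S : Sig K)
    (htop : ∀ k : K, ∃ k', S.le k k' ∧ ∀ k'', S.le k k'' → S.le k'' k')
    (τ σ : Ty K) (α : ℕ) (mτ mσ : Ty K)
    (hmτ : IsMaxTy S τ mτ) (hmσ : IsMaxTy S σ mσ) :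
    IsMaxTy S (Ty.subst1 α σ τ) (Ty.subst1 α mσ mτ) := by
  refine IsMaxTy.subst htop (fun n => ?_) τ mτ hmτ
  split_ifs
  · exact hmσ
  · exact .param n
end

section
/- A subtype inequality of the form τ[α] ≤ α, where τ strictly contains the parameter α, has no solution if α occurs in Max(τ), i.e., if α ∈ vars(Max(τ)) then there is no type σ with τ[σ/α] ≤ σ. -/
/-! Writing `Max(t)` for the greatest supertype of `t`, the facts
`Max(τ[σ/α]) = Max(τ)[Max(σ)/α]` and `t ≤ s → Max(t) = Max(s)` turn a solution `τ[σ/α] ≤ σ`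
into the fixed-point equation `Max(σ) = Max(τ)[Max(σ)/α]`. Since `α` occurs in `Max(τ)` and
`Max(τ) ≠ α` (otherwise `τ = α`, which `τ` strictly containing `α` excludes), the right-hand side
is strictly larger than `Max(σ)`. -/

namespace Ty

variable {K : Type}

@[simp]
lemma subst_con_s7 (θ : ℕ → Ty K) (k : K) (as : List (Ty K)) :
    (con k as).subst θ = con k (as.map (subst θ)) := by
  rw [subst]; simp

@[simp]
lemma subst1_con (α : ℕ) (σ : Ty K) (k : K) (as : List (Ty K)) :
    subst1 α σ (con k as) = con k (as.map (subst1 α σ)) := by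
  simp [subst1]

@[simp]
lemma subst1_param (α : ℕ) (σ : Ty K) (n : ℕ) :
    subst1 α σ (param n) = if n = α then σ else param n := by
  rw [subst1, subst]

@[simp]
lemma size_con (k : K) (as : List (Ty K)) : (con k as).size = 1 + (as.map size).sum := by
  rw [size]; simp

lemma sizeOf_getD_lt_sizeOf_con (as : List (Ty K)) (j : ℕ) (k : K) :
    sizeOf (as.getD j (param 0)) < sizeOf (con k as) := by
  rcases Nat.lt_or_ge j as.length with h | h
  · rw [List.getD_eq_getElem _ _ h]
    have := List.sizeOf_lt_of_mem (as.getElem_mem h)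
    simp only [con.sizeOf_spec]
    omega
  · rw [List.getD_eq_default _ _ h]
    have : 1 ≤ sizeOf as := by
      cases as <;> simp
      omega
    simp only [con.sizeOf_spec, param.sizeOf_spec, sizeOf_nat]
    omega

lemma size_lt_size_con_of_mem {u : Ty K} {as : List (Ty K)} (k : K) (hu : u ∈ as) :
    u.size < (con k as).size := by
  have := List.single_le_sum (fun y _ => Nat.zero_le y) _ (List.mem_map_of_mem (f := size) hu)
  rw [size_con]
  omega

lemma size_le_size_subst1 {α : ℕ} (x : Ty K) {t : Ty K} (h : Occurs α t) :
    x.size ≤ (subst1 α x t).size := by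
  induction h with
  | param => simp
  | @con k as u hu _ ih =>
    rw [subst1_con]
    exact ih.trans (size_lt_size_con_of_mem k (List.mem_map_of_mem hu)).le

lemma size_lt_size_subst1 {α : ℕ} (x : Ty K) {t : Ty K} (h : Occurs α t) (hne : t ≠ param α) :
    x.size < (subst1 α x t).size := by
  cases h with
  | param => exact absurd rfl hne
  | @con k as u hu hocc =>
    rw [subst1_con]
    exact (size_le_size_subst1 x hocc).trans_lt
      (size_lt_size_con_of_mem k (List.mem_map_of_mem hu))

end Ty

namespace SubTy

variable {K : Type} {S : Sig K}

lemma antisymm {t s : Ty K} (h : SubTy S t s) (h' : SubTy S s t) : t = s := by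
  induction h with
  | param n => rfl
  | @con k k' as as' hle hl hl' _ ih =>
    cases h' with
    | con hle' _ _ hargs' =>
      obtain rfl : k = k' := S.le_antisymm hle hle'
      congr 1
      refine List.ext_getElem (by omega) fun i hi hi' => ?_
      have e := ih i (by omega) (by simpa [S.iota_id] using hargs' i (by omega))
      rwa [S.iota_id, List.getD_eq_getElem _ _ hi, List.getD_eq_getElem _ _ hi'] at e

end SubTy

lemma IsMaxTy.unique {K : Type} {S : Sig K} {t m m' : Ty K}
    (hm : IsMaxTy S t m) (hm' : IsMaxTy S t m') : m = m' :=
  (hm'.2 m hm.1).antisymm (hm.2 m' hm'.1)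

/-- `Max(t)`: every constructor `k` of `t` is replaced by its greatest supertype constructor
`top k`, keeping the arguments that `S.iota` selects. -/
def maxTy {K : Type} (S : Sig K) (top : K → K) : Ty K → Ty K
  | .param n => .param n
  | .con k as => .con (top k) ((List.range (S.ar (top k))).map
      fun i => maxTy S top (as.getD (S.iota k (top k) i) (.param 0)))
termination_by t => sizeOf t
decreasing_by exact Ty.sizeOf_getD_lt_sizeOf_con as _ k

section maxTy

variable {K : Type} {S : Sig K} {top : K → K}

lemma Sig.le_top (S : Sig K) (htop : ∀ k k', S.le k k' → S.le k' (top k)) (k : K) :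
    S.le k (top k) :=
  htop k k (S.le_refl k)

lemma Sig.top_eq_of_le (S : Sig K) (htop : ∀ k k', S.le k k' → S.le k' (top k))
    {k k' : K} (h : S.le k k') : top k = top k' := by
  have h₁ : S.le (top k') (top k) := htop k _ (S.le_trans h (S.le_top htop k'))
  exact S.le_antisymm (htop k' _ (S.le_trans (S.le_top htop k') h₁)) h₁

@[simp]
lemma maxTy_param (n : ℕ) : maxTy S top (.param n) = .param n := by
  rw [maxTy]

lemma maxTy_con (k : K) (as : List (Ty K)) :
    maxTy S top (.con k as) = .con (top k) ((List.range (S.ar (top k))).map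
      fun i => maxTy S top (as.getD (S.iota k (top k) i) (.param 0))) := by
  rw [maxTy]

namespace SubTy

variable {t s : Ty K}

lemma maxTy_eq (htop : ∀ k k', S.le k k' → S.le k' (top k))
    (h : SubTy S t s) : maxTy S top t = maxTy S top s := by
  induction h with
  | param n => rfl
  | @con k k' as as' hle _ _ _ ih =>
    rw [maxTy_con, maxTy_con, S.top_eq_of_le htop hle]
    congr 1
    refine List.map_congr_left fun i hi => ?_
    rw [List.mem_range] at hi
    rw [S.iota_comp hle (S.le_top htop k') hi]
    exact ih _ (S.iota_lt (S.le_top htop k') hi)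

lemma subTy_maxTy_left (htop : ∀ k k', S.le k k' → S.le k' (top k)) (h : SubTy S t s) :
    SubTy S t (maxTy S top t) := by
  induction h with
  | param n => simpa using SubTy.param n
  | @con k k' as as' hle hl _ _ ih =>
    rw [maxTy_con]
    refine .con (S.le_top htop k) hl (by simp) fun i hi => ?_
    have hk' := htop k k' hle
    simpa [hi, S.iota_comp hle hk' hi] using ih _ (S.iota_lt hk' hi)

lemma subTy_maxTy_right (htop : ∀ k k', S.le k k' → S.le k' (top k)) (h : SubTy S t s) :
    SubTy S s (maxTy S top s) := by
  induction h with
  | param n => simpa using SubTy.param n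
  | @con k k' as as' hle _ hl' _ ih =>
    rw [maxTy_con]
    refine .con (S.le_top htop k') hl' (by simp) fun i hi => ?_
    simpa [hi] using ih _ (S.iota_lt (S.le_top htop k') hi)

lemma isMaxTy_maxTy (htop : ∀ k k', S.le k k' → S.le k' (top k)) (h : SubTy S t s) :
    IsMaxTy S t (maxTy S top t) :=
  ⟨h.subTy_maxTy_left htop, fun _ hs =>
    (hs.maxTy_eq htop).symm ▸ hs.subTy_maxTy_right htop⟩

end SubTy

theorem maxTy_subst1 (htop : ∀ k k', S.le k k' → S.le k' (top k)) (α : ℕ) (σ : Ty K) :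
    ∀ (t s : Ty K), SubTy S (Ty.subst1 α σ t) s →
      maxTy S top (Ty.subst1 α σ t) = Ty.subst1 α (maxTy S top σ) (maxTy S top t)
  | .param n, _, _ => by
    by_cases hn : n = α <;> simp [hn]
  | .con k as, _, h => by
    rw [Ty.subst1_con] at h
    obtain _ | ⟨hle, hl, _, hargs⟩ := h
    rw [List.length_map] at hl
    rw [Ty.subst1_con, maxTy_con, maxTy_con, Ty.subst1_con, List.map_map]
    congr 1
    refine List.map_congr_left fun i hi => ?_
    rw [List.mem_range] at hi
    have hk' := htop k _ hle
    have hj := S.iota_lt hk' hi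
    have hlt : S.iota k (top k) i < as.length := hl ▸ S.iota_lt (S.le_top htop k) hi
    have hget : (as.map (Ty.subst1 α σ)).getD (S.iota k (top k) i) (.param 0) =
        Ty.subst1 α σ (as.getD (S.iota k (top k) i) (.param 0)) := by
      simp [hlt]
    have harg := hargs _ hj
    rw [← S.iota_comp hle hk' hi, hget] at harg
    rw [hget, Function.comp_apply]
    exact maxTy_subst1 htop α σ _ _ harg
termination_by t => sizeOf t
decreasing_by exact Ty.sizeOf_getD_lt_sizeOf_con as _ k

end maxTy

/-- an inequality τ[α] ≤ α, where τ strictly contains α, has no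
solution if α occurs in Max(τ). -/
theorem no_solution_right {K : Type} (S : Sig K) (α : ℕ) (τ mτ : Ty K)
    (htop : ∀ k : K, ∃ k', S.le k k' ∧ ∀ k'', S.le k k'' → S.le k'' k')
    (hstrict : ∀ σ : Ty K, σ.size < (Ty.subst1 α σ τ).size)
    (hmτ : IsMaxTy S τ mτ) (hα : Occurs α mτ) :
    ¬ ∃ σ : Ty K, SubTy S (Ty.subst1 α σ τ) σ := by
  rintro ⟨σ, h⟩
  choose top _ htop using htop
  have hmτ_eq : mτ = maxTy S top τ := hmτ.unique (hmτ.1.isMaxTy_maxTy htop)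
  have hfix : maxTy S top σ = Ty.subst1 α (maxTy S top σ) mτ := calc
    maxTy S top σ = maxTy S top (Ty.subst1 α σ τ) := (h.maxTy_eq htop).symm
    _ = Ty.subst1 α (maxTy S top σ) mτ := by rw [maxTy_subst1 htop α σ τ σ h, hmτ_eq]
  have hne : mτ ≠ .param α := by
    rintro rfl
    cases hmτ.1
    simpa using hstrict (.param α)
  exact (Ty.size_lt_size_subst1 _ hα hne).ne (congrArg Ty.size hfix)
end
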